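/- arXiv:2505.07746 — 2 statements merged into one kernel-verified Lean document; each statement's English description precedes it below -/
import Mathlib

section
/- Let h : C_θ → ℝ be C¹ on the closed spherical cap, positive, with ∇_μ h = cot θ · h on ∂C_θ, and suppose the form ∇²h + hσ is positive semidefinite wherever h is C². If the function P = |∇h|² + h² attains its maximum at a boundary point ξ₀ ∈ ∂C_θ, and all tangential (to ∂C_θ) derivatives of h vanish at ξ₀, then |∇h|²(ξ₀) = cot²θ · h²(ξ₀), and hence max_{C_θ} |∇h| ≤ (1 + cot²θ)^{1/2} · max_{C_θ} h. -/
open Real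
open scoped RealInnerProductSpace

/-- boundary case of the C¹ estimate. If `P = |∇h|² + h²` attains its maximum
at a boundary point `ξ₀` where all tangential derivatives of `h` vanish and the Robin
condition `∇_μ h = cot θ · h` holds (with `μ` the unit conormal), then
`|∇h|²(ξ₀) = cot²θ · h²(ξ₀)`, and hence `max |∇h| ≤ (1 + cot²θ)^{1/2} · max h`.
Here `grad ξ` denotes the gradient of `h` at the point `ξ` and `M` a bound `h ≤ M`. -/
theorem c1_estimate_boundary_case {ι : Type*} {E : Type*}
    [NormedAddCommGroup E] [InnerProductSpace ℝ E]
    (θ M : ℝ) (h : ι → ℝ) (grad : ι → E) (ξ₀ : ι) (μ : E) (hμ : ‖μ‖ = 1)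
    (hpos : ∀ ξ, 0 < h ξ) (hM : ∀ ξ, h ξ ≤ M)
    (htang : ∀ t : E, ⟪t, μ⟫ = 0 → ⟪grad ξ₀, t⟫ = 0)
    (hrobin : ⟪grad ξ₀, μ⟫ = Real.cot θ * h ξ₀)
    (hmax : ∀ ξ, ‖grad ξ‖ ^ 2 + h ξ ^ 2 ≤ ‖grad ξ₀‖ ^ 2 + h ξ₀ ^ 2) :
    ‖grad ξ₀‖ ^ 2 = Real.cot θ ^ 2 * h ξ₀ ^ 2 ∧
      ∀ ξ, ‖grad ξ‖ ≤ Real.sqrt (1 + Real.cot θ ^ 2) * M := by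
  set g := grad ξ₀
  have hμ2 : ⟪μ, μ⟫ = 1 := by
    rw [real_inner_self_eq_norm_sq, hμ]; norm_num
  have hperp : ⟪g - ⟪g, μ⟫ • μ, μ⟫ = 0 := by
    rw [inner_sub_left, real_inner_smul_left, hμ2]; ring
  have h0 : ⟪g, g - ⟪g, μ⟫ • μ⟫ = 0 := htang _ hperp
  have hg2 : ‖g‖ ^ 2 = ⟪g, μ⟫ ^ 2 := by
    have := h0
    rw [inner_sub_right, real_inner_smul_right, real_inner_self_eq_norm_sq] at this
    nlinarith [this]
  have key : ‖g‖ ^ 2 = Real.cot θ ^ 2 * h ξ₀ ^ 2 := by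
    rw [hg2, hrobin]; ring
  refine ⟨key, fun ξ => ?_⟩
  have hM0 : h ξ₀ ≤ M := hM ξ₀
  have hh0 : 0 < h ξ₀ := hpos ξ₀
  have hb : ‖grad ξ‖ ^ 2 ≤ (1 + Real.cot θ ^ 2) * M ^ 2 := by
    have h1 := hmax ξ
    have h2 : h ξ₀ ^ 2 ≤ M ^ 2 := by nlinarith
    nlinarith [sq_nonneg (h ξ), sq_nonneg (Real.cot θ)]
  have hM0' : 0 ≤ M := le_trans hh0.le hM0
  have : ‖grad ξ‖ ≤ Real.sqrt ((1 + Real.cot θ ^ 2) * M ^ 2) := by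
    rw [show ‖grad ξ‖ = Real.sqrt (‖grad ξ‖ ^ 2) by
      rw [Real.sqrt_sq (norm_nonneg _)]]
    exact Real.sqrt_le_sqrt hb
  calc ‖grad ξ‖ ≤ Real.sqrt ((1 + Real.cot θ ^ 2) * M ^ 2) := this
    _ = Real.sqrt (1 + Real.cot θ ^ 2) * M := by
        rw [Real.sqrt_mul (by positivity), Real.sqrt_sq hM0']
end

section
/- Let h be a smooth positive solution to det(∇²h + hσ) = f h^{p-1} on C_θ with ∇_μ h = cot θ h on ∂C_θ, and suppose ∇²h + hσ > 0. Let G^{ij} be the cofactor-derivative of det at A = ∇²h + hσ. If v is a smooth function with ∇_μ v = cot θ v on ∂C_θ satisfying the linearized equation G^{ij}(v_{ij} + v σ_{ij}) = (p-1) f h^{p-2} v on C_θ, then the boundary integral ∫_{∂C_θ} G^{ij}(h vᵢ ⟨μ, eⱼ⟩ - v hᵢ ⟨μ, eⱼ⟩) ds vanishes. -/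
open Real MeasureTheory
open scoped RealInnerProductSpace

/-- vanishing of the boundary integral in the kernel triviality lemma.
Along `∂C_θ`, at each boundary point `x` (the boundary with its measure `ν`): `μv x` is
the unit conormal, `gradh x, gradv x` are the gradients of `h, v`, both satisfying the
Robin condition, and `G x` is the cofactor matrix `G^{ij}` of `A = ∇²h + hσ`; since `μ`
is a principal direction of `A`, the `μ`-row of `G` is parallel to `μ`
(`⟪G t, μ⟫ = 0` for tangential `t`). Then the boundary integrand
`G^{ij}(h vᵢ ⟨μ, eⱼ⟩ - v hᵢ ⟨μ, eⱼ⟩) = h ⟪G ∇v, μ⟫ - v ⟪G ∇h, μ⟫` vanishes identically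
and its integral over `∂C_θ` is zero. -/
theorem boundary_integral_vanishes {ι F : Type*}
    [NormedAddCommGroup F] [InnerProductSpace ℝ F]
    [MeasurableSpace ι] (ν : Measure ι) (θ : ℝ)
    (hval vval : ι → ℝ) (gradh gradv : ι → F) (μv : ι → F)
    (G : ι → F →L[ℝ] F)
    (hμ : ∀ x, ‖μv x‖ = 1)
    (hprinc : ∀ x (t : F), ⟪t, μv x⟫ = 0 → ⟪G x t, μv x⟫ = 0)
    (hrobinh : ∀ x, ⟪gradh x, μv x⟫ = Real.cot θ * hval x)
    (hrobinv : ∀ x, ⟪gradv x, μv x⟫ = Real.cot θ * vval x) :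
    (∀ x, hval x * ⟪G x (gradv x), μv x⟫ - vval x * ⟪G x (gradh x), μv x⟫ = 0) ∧
      ∫ x, (hval x * ⟪G x (gradv x), μv x⟫ - vval x * ⟪G x (gradh x), μv x⟫) ∂ν = 0 := by
  have key : ∀ x (w : F), ⟪G x w, μv x⟫ = ⟪w, μv x⟫ * ⟪G x (μv x), μv x⟫ := by
    intro x w
    have hdec : w = (w - ⟪w, μv x⟫ • μv x) + ⟪w, μv x⟫ • μv x := by abel
    have htan : ⟪w - ⟪w, μv x⟫ • μv x, μv x⟫ = 0 := by
      have hnorm : ⟪μv x, μv x⟫ = 1 := by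
        rw [real_inner_self_eq_norm_sq, hμ x]; norm_num
      simp [inner_sub_left, real_inner_smul_left, hnorm, hμ x]
    calc ⟪G x w, μv x⟫
        = ⟪G x ((w - ⟪w, μv x⟫ • μv x) + ⟪w, μv x⟫ • μv x), μv x⟫ := by rw [← hdec]
      _ = ⟪G x (w - ⟪w, μv x⟫ • μv x), μv x⟫ + ⟪w, μv x⟫ * ⟪G x (μv x), μv x⟫ := by
          rw [map_add, inner_add_left, _root_.map_smul, real_inner_smul_left]
      _ = ⟪w, μv x⟫ * ⟪G x (μv x), μv x⟫ := by rw [hprinc x _ htan, zero_add]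
  have hzero : ∀ x, hval x * ⟪G x (gradv x), μv x⟫ - vval x * ⟪G x (gradh x), μv x⟫ = 0 := by
    intro x
    rw [key x (gradv x), key x (gradh x), hrobinh x, hrobinv x]
    ring
  refine ⟨hzero, ?_⟩
  simp [hzero]
end
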